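/- arXiv:1603.07468 — 2 statements merged into one kernel-verified Lean document; each statement's English description precedes it below -/
import Mathlib

section
/- Let H be a finite-dimensional semisimple and cosemisimple Hopf algebra over an algebraically closed field k with normalized integral h ∈ H, dim H = n. For k ≥ 1, the subspace { x¹ ⊗ ⋯ ⊗ x^k ∈ H^{⊗k} : x¹ ⊗ ⋯ ⊗ x^k = h₁x¹ ⊗ h₂x² ⊗ ⋯ ⊗ h_k x^k } has dimension at most n^{k-1}. -/
open TensorProduct

/-- Convolution product on the dual of a coalgebra. -/
noncomputable def conv {k H : Type*} [CommSemiring k] [AddCommMonoid H] [Module k H]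
    [Coalgebra k H] (f g : Module.Dual k H) : Module.Dual k H :=
  (TensorProduct.lid k k).toLinearMap ∘ₗ TensorProduct.map f g ∘ₗ Coalgebra.comul

/-- `h` is a normalized two-sided integral of the Hopf algebra `H`. -/
def IsNormIntegral (k : Type*) {H : Type*} [CommSemiring k] [Semiring H] [HopfAlgebra k H]
    (h : H) : Prop :=
  Coalgebra.counit (R := k) h = 1 ∧
    ∀ x : H, x * h = Coalgebra.counit (R := k) x • h ∧ h * x = Coalgebra.counit (R := k) x • h

/-- `p ∈ H*` is a normalized two-sided integral of the dual Hopf algebra `H*`. -/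
def IsDualNormIntegral (k : Type*) {H : Type*} [CommSemiring k] [Semiring H] [HopfAlgebra k H]
    (p : Module.Dual k H) : Prop :=
  p 1 = 1 ∧ ∀ q : Module.Dual k H, conv q p = q 1 • p ∧ conv p q = q 1 • p

/-- The tensor power `H^{⊗(n+1)}`. -/
noncomputable def Hpow (k H : Type*) [Field k] [Ring H] [HopfAlgebra k H] : ℕ → ModuleCat k
  | 0 => ModuleCat.of k H
  | n + 1 => ModuleCat.of k (H ⊗[k] (Hpow k H n))

variable {k H : Type*} [Field k] [Ring H] [HopfAlgebra k H]

/-- The iterated coproduct `Δ_n : H → H^{⊗(n+1)}`. -/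
noncomputable def Δiter : ∀ n : ℕ, H →ₗ[k] Hpow k H n
  | 0 => LinearMap.id
  | n + 1 => (TensorProduct.map LinearMap.id (Δiter n)) ∘ₗ Coalgebra.comul

/-- Componentwise multiplication `H^{⊗(n+1)} ⊗ H^{⊗(n+1)} → H^{⊗(n+1)}`. -/
noncomputable def mulPow : ∀ n : ℕ, ((Hpow k H n) ⊗[k] (Hpow k H n)) →ₗ[k] Hpow k H n
  | 0 => LinearMap.mul' k H
  | n + 1 =>
      (TensorProduct.map (LinearMap.mul' k H) (mulPow n)) ∘ₗ
        (TensorProduct.tensorTensorTensorComm k H (Hpow k H n) H (Hpow k H n)).toLinearMap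


/-!
Componentwise left multiplication by `Δ_n(u)` makes `H^{⊗(n+1)}` an `H`-module (the tensor power
of the regular representation). For a right integral `h` one has `Δh (a ⊗ 1) = Δh (1 ⊗ S a)` in
`H ⊗ H`, hence `h · (a ⊗ c) = h₁ ⊗ h₂ · (S(a) c)`: every tensor fixed by `h` lies in the image of
`H^{⊗n}` under `z ↦ h₁ ⊗ h₂ · z`, a space of dimension at most `(dim H)^n`. For `n = 0` the fixed
points of `x ↦ h x` are multiples of `h`.
-/

open Coalgebra HopfAlgebra

theorem LinearMap.finrank_eqLocus_id_le_of_range_le {R M N : Type*} [Semiring R]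
    [StrongRankCondition R] [AddCommMonoid M] [Module R M] [AddCommMonoid N] [Module R N]
    [Module.Finite R N] {f : M →ₗ[R] M} {g : N →ₗ[R] M} (hfg : range f ≤ range g) :
    Module.finrank R (eqLocus f id) ≤ Module.finrank R N :=
  calc Module.finrank R (eqLocus f id)
      ≤ Module.finrank R (range g) := Submodule.finrank_mono fun x hx => hfg ⟨x, hx⟩
    _ ≤ Module.finrank R N := finrank_range_le g

section Integral

variable (R : Type*) {A : Type*} [CommSemiring R] [Semiring A] [HopfAlgebra R A]

def IsRightIntegral (Λ : A) : Prop :=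
  ∀ x : A, Λ * x = counit (R := R) x • Λ

variable {R}

theorem sum_comul_mul_one_tmul_antipode {a : A} {ι : Type*} (𝓡 : Repr R a ι) :
    ∑ i ∈ 𝓡.index, comul (R := R) (𝓡.left i) * (1 ⊗ₜ antipode R (𝓡.right i)) = a ⊗ₜ 1 := by
  -- apply `x ⊗ y ⊗ z ↦ x ⊗ y S(z)` to coassociativity `a₁₁ ⊗ a₁₂ ⊗ a₂ = a₁ ⊗ a₂₁ ⊗ a₂₂`
  have coassoc := congr(map LinearMap.id (LinearMap.mul' R A ∘ₗ (antipode R).lTensor A)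
    $(sum_tmul_tmul_eq 𝓡 (fun i => ℛ R (𝓡.left i)) (fun i => ℛ R (𝓡.right i))))
  simp only [map_sum, map_tmul, LinearMap.id_apply, LinearMap.comp_apply, LinearMap.lTensor_tmul,
    LinearMap.mul'_apply, ← tmul_sum, sum_mul_antipode_eq_smul] at coassoc
  calc _ = _ := by
        simp only [← (ℛ R (𝓡.left _)).eq, Finset.sum_mul, Algebra.TensorProduct.tmul_mul_tmul,
          mul_one]
    _ = _ := coassoc
    _ = a ⊗ₜ 1 := by
      simpa only [map_sum, LinearMap.lTensor_tmul, Algebra.linearMap_apply,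
        Algebra.algebraMap_eq_smul_one, one_smul]
        using congr((Algebra.linearMap R A).lTensor A $(sum_tmul_counit_eq 𝓡))

theorem IsRightIntegral.comul_mul_tmul_one {Λ : A} (hΛ : IsRightIntegral R Λ) (a : A) :
    comul Λ * (a ⊗ₜ[R] 1) = comul Λ * (1 ⊗ₜ[R] antipode R a) := by
  let 𝓡 := ℛ R a
  calc comul Λ * (a ⊗ₜ[R] 1)
      = ∑ i ∈ 𝓡.index, comul (Λ * 𝓡.left i) * (1 ⊗ₜ[R] antipode R (𝓡.right i)) := by
        simp only [← sum_comul_mul_one_tmul_antipode 𝓡, Finset.mul_sum, Bialgebra.comul_mul,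
          mul_assoc]
    _ = ∑ i ∈ 𝓡.index,
          counit (R := R) (𝓡.left i) • (comul Λ * (1 ⊗ₜ[R] antipode R (𝓡.right i))) := by
        simp only [hΛ _, map_smul, smul_mul_assoc]
    _ = comul Λ * (1 ⊗ₜ[R] antipode R a) := by
        conv_rhs => rw [← sum_counit_smul 𝓡]
        simp only [map_sum, map_smul, tmul_sum, tmul_smul, Finset.mul_sum, mul_smul_comm]

theorem IsRightIntegral.range_mulLeft_le {Λ : A} (hΛ : IsRightIntegral R Λ) :
    LinearMap.range (LinearMap.mulLeft R Λ) ≤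
      LinearMap.range (LinearMap.toSpanSingleton R A Λ) := by
  rintro _ ⟨x, rfl⟩
  exact ⟨counit x, (hΛ x).symm⟩

variable {M : Type*} [AddCommMonoid M] [Module R M]

noncomputable def lmulTensor (ρ : A →ₐ[R] Module.End R M) :
    A ⊗[R] A →ₐ[R] Module.End R (A ⊗[R] M) :=
  Module.endTensorEndAlgHom.comp (Algebra.TensorProduct.map (Algebra.lmul R A) ρ)

theorem lmulTensor_tmul_tmul (ρ : A →ₐ[R] Module.End R M) (x y p : A) (q : M) :
    lmulTensor ρ (x ⊗ₜ[R] y) (p ⊗ₜ[R] q) = (x * p) ⊗ₜ[R] ρ y q :=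
  rfl

theorem IsRightIntegral.range_lmulTensor_comul_le {Λ : A} (hΛ : IsRightIntegral R Λ)
    (ρ : A →ₐ[R] Module.End R M) :
    LinearMap.range (lmulTensor ρ (comul Λ)) ≤
      LinearMap.range (lmulTensor ρ (comul Λ) ∘ₗ TensorProduct.mk R A M 1) := by
  rintro _ ⟨x, rfl⟩
  induction x using TensorProduct.induction_on with
  | zero => rw [map_zero]; exact zero_mem _
  | tmul a c =>
    refine ⟨ρ (antipode R a) c, ?_⟩
    calc lmulTensor ρ (comul Λ) (1 ⊗ₜ ρ (antipode R a) c)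
        = lmulTensor ρ (comul Λ * (1 ⊗ₜ antipode R a)) (1 ⊗ₜ c) := by
          rw [map_mul, Module.End.mul_apply, lmulTensor_tmul_tmul, one_mul]
      _ = lmulTensor ρ (comul Λ * (a ⊗ₜ 1)) (1 ⊗ₜ c) := by rw [hΛ.comul_mul_tmul_one]
      _ = lmulTensor ρ (comul Λ) (a ⊗ₜ c) := by
          rw [map_mul, Module.End.mul_apply, lmulTensor_tmul_tmul, mul_one, map_one,
            Module.End.one_apply]
  | add x y hx hy => rw [map_add]; exact add_mem hx hy

end Integral

instance Hpow.finiteDimensional [FiniteDimensional k H] :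
    ∀ n, FiniteDimensional k (Hpow k H n)
  | 0 => ‹FiniteDimensional k H›
  | n + 1 =>
    have := Hpow.finiteDimensional n
    inferInstanceAs (FiniteDimensional k (H ⊗[k] Hpow k H n))

theorem finrank_Hpow [FiniteDimensional k H] :
    ∀ n, Module.finrank k (Hpow k H n) = Module.finrank k H ^ (n + 1)
  | 0 => (pow_one _).symm
  | n + 1 => by
    rw [pow_succ', ← finrank_Hpow n]
    exact Module.finrank_tensorProduct (M := H) (M' := Hpow k H n)

noncomputable def tensorPowAction : ∀ n : ℕ, H →ₐ[k] Module.End k (Hpow k H n)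
  | 0 => Algebra.lmul k H
  | n + 1 => (lmulTensor (tensorPowAction n)).comp (Bialgebra.comulAlgHom k H)

theorem mulPow_comp_mk_Δiter (n : ℕ) (u : H) :
    mulPow n ∘ₗ TensorProduct.mk k _ _ (Δiter n u) = (tensorPowAction n u : Module.End k _) := by
  induction n generalizing u with
  | zero => rfl
  | succ n ih =>
    refine TensorProduct.ext' fun a c => ?_
    have key : mulPow (n + 1) ∘ₗ
        (TensorProduct.mk k (Hpow k H (n + 1)) (Hpow k H (n + 1))).flip (a ⊗ₜ c) ∘ₗ
        TensorProduct.map LinearMap.id (Δiter n) =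
        LinearMap.applyₗ (M := H ⊗[k] Hpow k H n) (M₂ := H ⊗[k] Hpow k H n) (a ⊗ₜ c) ∘ₗ
          (lmulTensor (tensorPowAction n)).toLinearMap :=
      TensorProduct.ext' fun p q => by
        change _ = lmulTensor (tensorPowAction n) (p ⊗ₜ q) (a ⊗ₜ c)
        rw [lmulTensor_tmul_tmul, ← ih]
        rfl
    exact congr($key (comul u))

theorem IsNormIntegral.isRightIntegral {h : H} (hh : IsNormIntegral k h) : IsRightIntegral k h :=
  fun x => (hh.2 x).2

theorem stmt15_general [FiniteDimensional k H]
    (h : H) (hh : IsNormIntegral k h) (n : ℕ) :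
    Module.finrank k
        (LinearMap.eqLocus
          ((mulPow n) ∘ₗ (TensorProduct.mk k (Hpow k H n) (Hpow k H n)) (Δiter n h))
          (LinearMap.id)) ≤
      Module.finrank k H ^ n := by
  rw [mulPow_comp_mk_Δiter]
  cases n with
  | zero =>
    rw [pow_zero, ← Module.finrank_self k]
    exact LinearMap.finrank_eqLocus_id_le_of_range_le
      hh.isRightIntegral.range_mulLeft_le
  | succ n =>
    exact (LinearMap.finrank_eqLocus_id_le_of_range_le
      (hh.isRightIntegral.range_lmulTensor_comul_le (tensorPowAction n))).trans_eq
      (finrank_Hpow n)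

/-- The subspace of `H^{⊗(n+1)}` of tensors fixed by componentwise left multiplication by the
iterated coproduct of `h` has dimension at most `(dim H)^n`. -/
theorem stmt15 [IsAlgClosed k] [FiniteDimensional k H] [IsSemisimpleRing H]
    (hcos : ∃ p : Module.Dual k H, IsDualNormIntegral k p)
    (h : H) (hh : IsNormIntegral k h) (n : ℕ) :
    Module.finrank k
        (LinearMap.eqLocus
          ((mulPow n) ∘ₗ (TensorProduct.mk k (Hpow k H n) (Hpow k H n)) (Δiter n h))
          (LinearMap.id)) ≤
      Module.finrank k H ^ n :=
  stmt15_general h hh n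
end

section
/- Let H be a finite-dimensional semisimple and cosemisimple Hopf algebra over an algebraically closed field k. In the 6-fold iterated crossed product H* ⋊ H ⋊ H* ⋊ H ⋊ H* ⋊ H (built from the actions f·a = f(a₂)a₁ and a·f = f₂(a)f₁), the elements ε ⋊ 1 ⋊ f₂ ⋊ 1 ⋊ f₁ ⋊ 1 and ε ⋊ x₁ ⋊ ε ⋊ 1 ⋊ ε ⋊ x₂ commute, for all f ∈ H* and x ∈ H. -/
open TensorProduct

/-!
Put `t = ∑ f₂ ⊗ f₁ ∈ H* ⊗ H*`, so that the first element is `ε ⋊ 1 ⋊ t ⋊ 1` with the legs of `t`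
in the two inner `H*`-slots. Multiplying it on the right by `ε ⋊ x₁ ⋊ ε ⋊ 1 ⋊ ε ⋊ x₂` translates
the left leg of `t`, giving `ε ⋊ x₍₁₎ ⋊ (L*_{x₍₂₎} ⊗ id) t ⋊ x₍₃₎`; multiplying on the left
translates its right leg, giving `ε ⋊ x₍₁₎ ⋊ (id ⊗ R*_{x₍₂₎}) t ⋊ x₍₃₎` (coassociativity puts both
in terms of the same `x₍₁₎ ⊗ x₍₂₎ ⊗ x₍₃₎`). Both translates of `t` represent the form
`v ⊗ y ↦ f (y * w * v)`, and `H* ⊗ H* → (H ⊗ H)*` is injective for finite-dimensional `H`.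
-/

open Finset

theorem TensorProduct.exists_sum_range_tmul_eq {R M N : Type*} [CommSemiring R]
    [AddCommMonoid M] [AddCommMonoid N] [Module R M] [Module R N] (x : M ⊗[R] N) :
    ∃ (n : ℕ) (m : ℕ → M) (m' : ℕ → N), x = ∑ j ∈ range n, m j ⊗ₜ[R] m' j := by
  obtain ⟨n, m, m', rfl⟩ := exists_sum_tmul_eq x
  refine ⟨n, fun j => if h : j < n then m ⟨j, h⟩ else 0,
    fun j => if h : j < n then m' ⟨j, h⟩ else 0, ?_⟩
  rw [← Fin.sum_univ_eq_sum_range (fun j => (if h : j < n then m ⟨j, h⟩ else 0) ⊗ₜ[R]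
    (if h : j < n then m' ⟨j, h⟩ else 0))]
  simp

section Conv

variable {k H : Type*} [CommSemiring k] [AddCommMonoid H] [Module k H] [Coalgebra k H]

theorem conv_counit_left (g : Module.Dual k H) : conv Coalgebra.counit g = g := by
  ext y
  simp [conv, ← LinearMap.lTensor_comp_rTensor, Coalgebra.rTensor_counit_comul]

theorem conv_counit_right (g : Module.Dual k H) : conv g Coalgebra.counit = g := by
  ext y
  simp [conv, ← LinearMap.rTensor_comp_lTensor, Coalgebra.lTensor_counit_comul]

end Conv

theorem TensorProduct.dualDistrib_rTensor_dualMap {R M M' N : Type*} [CommSemiring R]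
    [AddCommMonoid M] [AddCommMonoid M'] [AddCommMonoid N] [Module R M] [Module R M']
    [Module R N] (u : M' →ₗ[R] M) (s : Module.Dual R M ⊗[R] Module.Dual R N) (v : M') (y : N) :
    dualDistrib R M' N (u.dualMap.rTensor _ s) (v ⊗ₜ y) = dualDistrib R M N s (u v ⊗ₜ y) := by
  induction s using TensorProduct.induction_on with
  | zero => simp
  | tmul g h => simp
  | add s s' hs hs' => simp_all

theorem TensorProduct.dualDistrib_lTensor_dualMap {R M N N' : Type*} [CommSemiring R]
    [AddCommMonoid M] [AddCommMonoid N] [AddCommMonoid N'] [Module R M] [Module R N]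
    [Module R N'] (u : N' →ₗ[R] N) (s : Module.Dual R M ⊗[R] Module.Dual R N) (v : M) (y : N') :
    dualDistrib R M N' (u.dualMap.lTensor _ s) (v ⊗ₜ y) = dualDistrib R M N s (v ⊗ₜ u y) := by
  induction s using TensorProduct.induction_on with
  | zero => simp
  | tmul g h => simp
  | add s s' hs hs' => simp_all

section Translate

variable {k H : Type*} [CommSemiring k] [Semiring H] [Algebra k H]

noncomputable def leftTranslateTensor (t : Module.Dual k H ⊗[k] Module.Dual k H) :
    H →ₗ[k] Module.Dual k H ⊗[k] Module.Dual k H :=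
  (LinearMap.rTensorHom _ ∘ₗ Module.Dual.transpose ∘ₗ LinearMap.mul k H).flip t

noncomputable def rightTranslateTensor (t : Module.Dual k H ⊗[k] Module.Dual k H) :
    H →ₗ[k] Module.Dual k H ⊗[k] Module.Dual k H :=
  (LinearMap.lTensorHom _ ∘ₗ Module.Dual.transpose ∘ₗ (LinearMap.mul k H).flip).flip t

@[simp] theorem leftTranslateTensor_apply (t : Module.Dual k H ⊗[k] Module.Dual k H) (w : H) :
    leftTranslateTensor t w = (LinearMap.mulLeft k w).dualMap.rTensor _ t := rfl

@[simp] theorem rightTranslateTensor_apply (t : Module.Dual k H ⊗[k] Module.Dual k H) (w : H) :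
    rightTranslateTensor t w = (LinearMap.mulRight k w).dualMap.lTensor _ t := rfl

end Translate

theorem leftTranslateTensor_eq_rightTranslateTensor {k H : Type*} [Field k] [Ring H] [Algebra k H]
    [FiniteDimensional k H] (f : Module.Dual k H) (t : Module.Dual k H ⊗[k] Module.Dual k H)
    (ht : ∀ v y : H, TensorProduct.dualDistrib k H H t (v ⊗ₜ y) = f (y * v)) :
    leftTranslateTensor t = rightTranslateTensor t := by
  ext w : 1
  refine (TensorProduct.dualDistribEquiv k H H).injective (TensorProduct.ext' fun v y => ?_)
  change TensorProduct.dualDistrib k H H _ (v ⊗ₜ y) = TensorProduct.dualDistrib k H H _ (v ⊗ₜ y)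
  simp only [leftTranslateTensor_apply, rightTranslateTensor_apply,
    TensorProduct.dualDistrib_rTensor_dualMap, TensorProduct.dualDistrib_lTensor_dualMap,
    LinearMap.mulLeft_apply, LinearMap.mulRight_apply, ht, mul_assoc]

section CrossedProduct

variable {k H : Type*} [CommSemiring k] [Semiring H] [Bialgebra k H]

local notation "ε" => Coalgebra.counit (R := k) (A := H)

variable (k H) in
abbrev SixFold : Type _ :=
  ((((Module.Dual k H ⊗[k] H) ⊗[k] Module.Dual k H) ⊗[k] H) ⊗[k] Module.Dual k H) ⊗[k] H

/-- The multiplication rule of `H* ⋊ H ⋊ H* ⋊ H ⋊ H* ⋊ H` on pure tensors. -/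
def IsSixFoldCrossedMul (M6 : SixFold k H →ₗ[k] SixFold k H →ₗ[k] SixFold k H) : Prop :=
  ∀ {u1 u3 u5 v1 v3 v5 : Module.Dual k H} {u2 u4 u6 v2 v4 v6 : H}
      {s1 s2 s3 s4 s5 : Finset ℕ} {a a' c c' e e' b b' d d' : ℕ → H}
      (_ : Coalgebra.comul (R := k) u2 = ∑ i ∈ s1, a i ⊗ₜ[k] a' i)
      (_ : Coalgebra.comul (R := k) u4 = ∑ j ∈ s2, c j ⊗ₜ[k] c' j)
      (_ : Coalgebra.comul (R := k) u6 = ∑ l ∈ s3, e l ⊗ₜ[k] e' l)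
      (_ : Coalgebra.comul (R := k) v2 = ∑ m ∈ s4, b m ⊗ₜ[k] b' m)
      (_ : Coalgebra.comul (R := k) v4 = ∑ n ∈ s5, d n ⊗ₜ[k] d' n),
      M6 (((((u1 ⊗ₜ[k] u2) ⊗ₜ[k] u3) ⊗ₜ[k] u4) ⊗ₜ[k] u5) ⊗ₜ[k] u6)
          (((((v1 ⊗ₜ[k] v2) ⊗ₜ[k] v3) ⊗ₜ[k] v4) ⊗ₜ[k] v5) ⊗ₜ[k] v6) =
        ∑ i ∈ s1, ∑ j ∈ s2, ∑ l ∈ s3, ∑ m ∈ s4, ∑ n ∈ s5,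
          ((((conv u1 (v1 ∘ₗ LinearMap.mulRight k (a i)) ⊗ₜ[k] (a' i * b m)) ⊗ₜ[k]
                conv (u3 ∘ₗ LinearMap.mulLeft k (b' m))
                  (v3 ∘ₗ LinearMap.mulRight k (c j))) ⊗ₜ[k] (c' j * d n)) ⊗ₜ[k]
              conv (u5 ∘ₗ LinearMap.mulLeft k (d' n))
                (v5 ∘ₗ LinearMap.mulRight k (e l))) ⊗ₜ[k] (e' l * v6)

noncomputable def sixFoldEmbed :
    (H ⊗[k] (Module.Dual k H ⊗[k] Module.Dual k H)) ⊗[k] H →ₗ[k] SixFold k H :=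
  LinearMap.rTensor H <| LinearMap.rTensor _
      ((TensorProduct.mk k _ H).flip 1 ∘ₗ
        LinearMap.rTensor _ (TensorProduct.mk k _ H ε)) ∘ₗ
    (TensorProduct.assoc k _ _ _).symm.toLinearMap

@[simp] theorem sixFoldEmbed_tmul (a c : H) (g h : Module.Dual k H) :
    sixFoldEmbed ((a ⊗ₜ (g ⊗ₜ h)) ⊗ₜ c) =
      ((((ε ⊗ₜ[k] a) ⊗ₜ[k] g) ⊗ₜ[k] (1 : H)) ⊗ₜ[k] h) ⊗ₜ[k] c :=
  rfl

theorem comul_one_eq_sum_range_one :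
    Coalgebra.comul (R := k) (1 : H) = ∑ _ ∈ range 1, (1 : H) ⊗ₜ (1 : H) := by
  simp [Algebra.TensorProduct.one_def]

theorem counit_comp_mulRight (w : H) : ε ∘ₗ LinearMap.mulRight k w = ε w • ε := by
  ext y
  simp [mul_comm]

variable {M6 : SixFold k H →ₗ[k] SixFold k H →ₗ[k] SixFold k H}

theorem IsSixFoldCrossedMul.embed_mul_tmul (hM : IsSixFoldCrossedMul M6)
    (t : Module.Dual k H ⊗[k] Module.Dual k H) (y z : H) :
    M6 (sixFoldEmbed ((1 ⊗ₜ t) ⊗ₜ 1)) (((((ε ⊗ₜ y) ⊗ₜ ε) ⊗ₜ 1) ⊗ₜ ε) ⊗ₜ z) =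
      sixFoldEmbed ((LinearMap.lTensor H (leftTranslateTensor t)).rTensor H
        (Coalgebra.comul y ⊗ₜ z)) := by
  obtain ⟨n, b, b', hy⟩ := TensorProduct.exists_sum_range_tmul_eq (Coalgebra.comul (R := k) y)
  simp only [hy, sum_tmul, map_sum, LinearMap.rTensor_tmul, LinearMap.lTensor_tmul,
    leftTranslateTensor_apply]
  induction t using TensorProduct.induction_on with
  | zero => simp
  | tmul g h =>
    have h1 := comul_one_eq_sum_range_one (k := k) (H := H)
    rw [sixFoldEmbed_tmul, hM h1 h1 h1 hy h1]
    simp [conv_counit_right, LinearMap.dualMap_apply']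
  | add t t' ht ht' => simp [tmul_add, add_tmul, sum_add_distrib, ht, ht']

theorem IsSixFoldCrossedMul.tmul_mul_embed (hM : IsSixFoldCrossedMul M6)
    (t : Module.Dual k H ⊗[k] Module.Dual k H) (y z : H) :
    M6 (((((ε ⊗ₜ y) ⊗ₜ ε) ⊗ₜ 1) ⊗ₜ ε) ⊗ₜ z) (sixFoldEmbed ((1 ⊗ₜ t) ⊗ₜ 1)) =
      sixFoldEmbed ((LinearMap.lTensor H (rightTranslateTensor t)).rTensor H
        ((TensorProduct.assoc k H H H).symm (y ⊗ₜ Coalgebra.comul z))) := by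
  obtain ⟨n, a, a', hy⟩ := TensorProduct.exists_sum_range_tmul_eq (Coalgebra.comul (R := k) y)
  obtain ⟨n', e, e', hz⟩ := TensorProduct.exists_sum_range_tmul_eq (Coalgebra.comul (R := k) z)
  simp only [hz, tmul_sum, map_sum, TensorProduct.assoc_symm_tmul, LinearMap.rTensor_tmul,
    LinearMap.lTensor_tmul, rightTranslateTensor_apply]
  induction t using TensorProduct.induction_on with
  | zero => simp
  | tmul g h =>
    have h1 := comul_one_eq_sum_range_one (k := k) (H := H)
    rw [sixFoldEmbed_tmul, hM hy h1 hz h1 h1]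
    simp only [sum_singleton, range_one, LinearMap.mulLeft_one, LinearMap.mulRight_one,
      LinearMap.comp_id, conv_counit_left, mul_one, counit_comp_mulRight, smul_tmul]
    -- counitality: `∑ (ε ∘ R_{y₍₁₎}) ⊗ y₍₂₎ = ε ⊗ y`
    rw [sum_comm]
    simp only [← sum_tmul, ← tmul_sum, Coalgebra.sum_counit_smul ⟨range n, a, a', hy.symm⟩]
    simp [LinearMap.dualMap_apply']
  | add t t' ht ht' => simp [tmul_add, add_tmul, sum_add_distrib, ht, ht']

end CrossedProduct

open Finset HopfAlgebra in
theorem stmt17_general {k H : Type*} [Field k] [Ring H] [HopfAlgebra k H]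
    [FiniteDimensional k H]
    (M6 : (((((Module.Dual k H ⊗[k] H) ⊗[k] Module.Dual k H) ⊗[k] H) ⊗[k]
          Module.Dual k H) ⊗[k] H) →ₗ[k]
        (((((Module.Dual k H ⊗[k] H) ⊗[k] Module.Dual k H) ⊗[k] H) ⊗[k]
          Module.Dual k H) ⊗[k] H) →ₗ[k]
        (((((Module.Dual k H ⊗[k] H) ⊗[k] Module.Dual k H) ⊗[k] H) ⊗[k]
          Module.Dual k H) ⊗[k] H))
    (hM6 : ∀ (u1 u3 u5 v1 v3 v5 : Module.Dual k H) (u2 u4 u6 v2 v4 v6 : H)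
      (s1 s2 s3 s4 s5 : Finset ℕ) (a a' c c' e e' b b' d d' : ℕ → H)
      (_ : Coalgebra.comul (R := k) u2 = ∑ i ∈ s1, a i ⊗ₜ[k] a' i)
      (_ : Coalgebra.comul (R := k) u4 = ∑ j ∈ s2, c j ⊗ₜ[k] c' j)
      (_ : Coalgebra.comul (R := k) u6 = ∑ l ∈ s3, e l ⊗ₜ[k] e' l)
      (_ : Coalgebra.comul (R := k) v2 = ∑ m ∈ s4, b m ⊗ₜ[k] b' m)
      (_ : Coalgebra.comul (R := k) v4 = ∑ n ∈ s5, d n ⊗ₜ[k] d' n),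
      M6 (((((u1 ⊗ₜ[k] u2) ⊗ₜ[k] u3) ⊗ₜ[k] u4) ⊗ₜ[k] u5) ⊗ₜ[k] u6)
          (((((v1 ⊗ₜ[k] v2) ⊗ₜ[k] v3) ⊗ₜ[k] v4) ⊗ₜ[k] v5) ⊗ₜ[k] v6) =
        ∑ i ∈ s1, ∑ j ∈ s2, ∑ l ∈ s3, ∑ m ∈ s4, ∑ n ∈ s5,
          ((((conv u1 (v1 ∘ₗ LinearMap.mulRight k (a i)) ⊗ₜ[k] (a' i * b m)) ⊗ₜ[k]
                conv (u3 ∘ₗ LinearMap.mulLeft k (b' m))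
                  (v3 ∘ₗ LinearMap.mulRight k (c j))) ⊗ₜ[k] (c' j * d n)) ⊗ₜ[k]
              conv (u5 ∘ₗ LinearMap.mulLeft k (d' n))
                (v5 ∘ₗ LinearMap.mulRight k (e l))) ⊗ₜ[k] (e' l * v6)) :
    ∀ (f : Module.Dual k H) (x : H)
      (u : Finset ℕ) (F1 F2 : ℕ → Module.Dual k H)
      (_ : ∀ v w : H, f (v * w) = ∑ l ∈ u, F1 l v * F2 l w)
      (s : Finset ℕ) (x1 x2 : ℕ → H)
      (_ : Coalgebra.comul (R := k) x = ∑ i ∈ s, x1 i ⊗ₜ[k] x2 i),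
      M6 (∑ l ∈ u, (((((Coalgebra.counit (R := k) (A := H)) ⊗ₜ[k] (1 : H)) ⊗ₜ[k] F2 l) ⊗ₜ[k]
            (1 : H)) ⊗ₜ[k] F1 l) ⊗ₜ[k] (1 : H))
          (∑ i ∈ s, (((((Coalgebra.counit (R := k) (A := H)) ⊗ₜ[k] x1 i) ⊗ₜ[k]
            (Coalgebra.counit (R := k) (A := H))) ⊗ₜ[k] (1 : H)) ⊗ₜ[k]
            (Coalgebra.counit (R := k) (A := H))) ⊗ₜ[k] x2 i) =
        M6 (∑ i ∈ s, (((((Coalgebra.counit (R := k) (A := H)) ⊗ₜ[k] x1 i) ⊗ₜ[k]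
            (Coalgebra.counit (R := k) (A := H))) ⊗ₜ[k] (1 : H)) ⊗ₜ[k]
            (Coalgebra.counit (R := k) (A := H))) ⊗ₜ[k] x2 i)
          (∑ l ∈ u, (((((Coalgebra.counit (R := k) (A := H)) ⊗ₜ[k] (1 : H)) ⊗ₜ[k] F2 l) ⊗ₜ[k]
            (1 : H)) ⊗ₜ[k] F1 l) ⊗ₜ[k] (1 : H)) := by
  intro f x u F1 F2 hF s x1 x2 hx
  have hcoassoc : ∑ i ∈ s, Coalgebra.comul (R := k) (x1 i) ⊗ₜ x2 i =
      ∑ i ∈ s, (TensorProduct.assoc k H H H).symm (x1 i ⊗ₜ Coalgebra.comul (x2 i)) := by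
    have := (Coalgebra.coassoc_symm_apply (R := k) x).symm
    rw [hx, map_sum, map_sum, map_sum] at this
    simpa only [LinearMap.rTensor_tmul, LinearMap.lTensor_tmul] using this
  have hM : IsSixFoldCrossedMul M6 := @hM6
  set t : Module.Dual k H ⊗[k] Module.Dual k H := ∑ l ∈ u, F2 l ⊗ₜ F1 l
  have hA : ∑ l ∈ u, (((((Coalgebra.counit (R := k) (A := H)) ⊗ₜ[k] (1 : H)) ⊗ₜ[k] F2 l) ⊗ₜ[k]
      (1 : H)) ⊗ₜ[k] F1 l) ⊗ₜ[k] (1 : H) = sixFoldEmbed ((1 ⊗ₜ t) ⊗ₜ 1) := by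
    simp [t, tmul_sum, sum_tmul]
  have ht : ∀ v y : H, TensorProduct.dualDistrib k H H t (v ⊗ₜ y) = f (y * v) := by
    simp [t, hF, mul_comm]
  simp only [hA, map_sum, LinearMap.sum_apply]
  simp only [hM.embed_mul_tmul t, hM.tmul_mul_embed t]
  rw [leftTranslateTensor_eq_rightTranslateTensor f t ht]
  have := congrArg
    (sixFoldEmbed ∘ₗ (LinearMap.lTensor H (rightTranslateTensor t)).rTensor H) hcoassoc
  rwa [map_sum, map_sum] at this

open Finset HopfAlgebra in
/-- In the 6-fold iterated crossed product `H* ⋊ H ⋊ H* ⋊ H ⋊ H* ⋊ H` (multiplication `M6`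
built from the actions `f·a = f(a₂)a₁` and `a·f = f₂(a)f₁`, characterized on pure tensors via
finite Sweedler representations), the elements `ε ⋊ 1 ⋊ f₂ ⋊ 1 ⋊ f₁ ⋊ 1` and
`ε ⋊ x₁ ⋊ ε ⋊ 1 ⋊ ε ⋊ x₂` commute, for all `f ∈ H*` and `x ∈ H`. -/
theorem stmt17 {k H : Type*} [Field k] [IsAlgClosed k] [Ring H] [HopfAlgebra k H]
    [FiniteDimensional k H] [IsSemisimpleRing H]
    (hcos : ∃ p : Module.Dual k H, IsDualNormIntegral k p)
    (M6 : (((((Module.Dual k H ⊗[k] H) ⊗[k] Module.Dual k H) ⊗[k] H) ⊗[k]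
          Module.Dual k H) ⊗[k] H) →ₗ[k]
        (((((Module.Dual k H ⊗[k] H) ⊗[k] Module.Dual k H) ⊗[k] H) ⊗[k]
          Module.Dual k H) ⊗[k] H) →ₗ[k]
        (((((Module.Dual k H ⊗[k] H) ⊗[k] Module.Dual k H) ⊗[k] H) ⊗[k]
          Module.Dual k H) ⊗[k] H))
    (hM6 : ∀ (u1 u3 u5 v1 v3 v5 : Module.Dual k H) (u2 u4 u6 v2 v4 v6 : H)
      (s1 s2 s3 s4 s5 : Finset ℕ) (a a' c c' e e' b b' d d' : ℕ → H)
      (_ : Coalgebra.comul (R := k) u2 = ∑ i ∈ s1, a i ⊗ₜ[k] a' i)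
      (_ : Coalgebra.comul (R := k) u4 = ∑ j ∈ s2, c j ⊗ₜ[k] c' j)
      (_ : Coalgebra.comul (R := k) u6 = ∑ l ∈ s3, e l ⊗ₜ[k] e' l)
      (_ : Coalgebra.comul (R := k) v2 = ∑ m ∈ s4, b m ⊗ₜ[k] b' m)
      (_ : Coalgebra.comul (R := k) v4 = ∑ n ∈ s5, d n ⊗ₜ[k] d' n),
      M6 (((((u1 ⊗ₜ[k] u2) ⊗ₜ[k] u3) ⊗ₜ[k] u4) ⊗ₜ[k] u5) ⊗ₜ[k] u6)
          (((((v1 ⊗ₜ[k] v2) ⊗ₜ[k] v3) ⊗ₜ[k] v4) ⊗ₜ[k] v5) ⊗ₜ[k] v6) =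
        ∑ i ∈ s1, ∑ j ∈ s2, ∑ l ∈ s3, ∑ m ∈ s4, ∑ n ∈ s5,
          ((((conv u1 (v1 ∘ₗ LinearMap.mulRight k (a i)) ⊗ₜ[k] (a' i * b m)) ⊗ₜ[k]
                conv (u3 ∘ₗ LinearMap.mulLeft k (b' m))
                  (v3 ∘ₗ LinearMap.mulRight k (c j))) ⊗ₜ[k] (c' j * d n)) ⊗ₜ[k]
              conv (u5 ∘ₗ LinearMap.mulLeft k (d' n))
                (v5 ∘ₗ LinearMap.mulRight k (e l))) ⊗ₜ[k] (e' l * v6)) :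
    ∀ (f : Module.Dual k H) (x : H)
      (u : Finset ℕ) (F1 F2 : ℕ → Module.Dual k H)
      (_ : ∀ v w : H, f (v * w) = ∑ l ∈ u, F1 l v * F2 l w)
      (s : Finset ℕ) (x1 x2 : ℕ → H)
      (_ : Coalgebra.comul (R := k) x = ∑ i ∈ s, x1 i ⊗ₜ[k] x2 i),
      M6 (∑ l ∈ u, (((((Coalgebra.counit (R := k) (A := H)) ⊗ₜ[k] (1 : H)) ⊗ₜ[k] F2 l) ⊗ₜ[k]
            (1 : H)) ⊗ₜ[k] F1 l) ⊗ₜ[k] (1 : H))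
          (∑ i ∈ s, (((((Coalgebra.counit (R := k) (A := H)) ⊗ₜ[k] x1 i) ⊗ₜ[k]
            (Coalgebra.counit (R := k) (A := H))) ⊗ₜ[k] (1 : H)) ⊗ₜ[k]
            (Coalgebra.counit (R := k) (A := H))) ⊗ₜ[k] x2 i) =
        M6 (∑ i ∈ s, (((((Coalgebra.counit (R := k) (A := H)) ⊗ₜ[k] x1 i) ⊗ₜ[k]
            (Coalgebra.counit (R := k) (A := H))) ⊗ₜ[k] (1 : H)) ⊗ₜ[k]
            (Coalgebra.counit (R := k) (A := H))) ⊗ₜ[k] x2 i)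
          (∑ l ∈ u, (((((Coalgebra.counit (R := k) (A := H)) ⊗ₜ[k] (1 : H)) ⊗ₜ[k] F2 l) ⊗ₜ[k]
            (1 : H)) ⊗ₜ[k] F1 l) ⊗ₜ[k] (1 : H)) :=
  stmt17_general M6 hM6
end
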